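/- Let 0 < c < d and ℓ = (d − c)/d, and let F be the piecewise map on the closed right half-plane from the paper (formula (2.1)). Define the extension F̃ : ℂ → ℂ by F̃(z) = F(z) for Re z ≥ 0 and F̃(z) = −conj(F(−conj z)) for Re z ≤ 0. Then the two formulas agree on the imaginary axis, F̃ is continuous on ℂ, and F̃ maps the isosceles trapezoid with vertices −d, d, c + i, −c + i onto the rectangle [−d, d] × [0, 1]. -/

import Mathlib

open Complex ComplexConjugate

/-- The piecewise map `f₁` of the paper (formula (2.1)) on the closed right half-plane:
the trapezoid formula on `G₁`, the shear on `G₂`, the stretch on `G₃`, the translation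
on `G₄` and the identity on `G₅`. -/
noncomputable def trapMap (ℓ c d : ℝ) (z : ℂ) : ℂ :=
  if z.im ≤ 0 then z
  else if z.im ≤ 1 then
    (if z.re ≤ d * (1 - ℓ * z.im) then
      (4 * z + I * (ℓ : ℂ) * (z - conj z) ^ 2) / (4 + 2 * I * (ℓ : ℂ) * (z - conj z))
     else z - (I * ((d : ℂ) - (c : ℂ)) / 2) * (z - conj z))
  else
    (if z.re ≤ c then ((2 - (ℓ : ℂ)) * z + (ℓ : ℂ) * conj z) / (2 * (1 - (ℓ : ℂ)))
     else z + ((d : ℂ) - (c : ℂ)))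

/-- The extension of `f₁` to the whole plane by the mirror reflection
`z ↦ −conj(F(−conj z))` in the imaginary axis. -/
noncomputable def trapMapExt (ℓ c d : ℝ) (z : ℂ) : ℂ :=
  if 0 ≤ z.re then trapMap ℓ c d z else -conj (trapMap ℓ c d (-conj z))

/-!
Every piece of `F` preserves imaginary parts, and its real part is one explicit formula:
at height `t ∈ [0, 1]` the horizontal line is stretched by `1 / (1 - ℓ t)` on the slice
`|x| ≤ d (1 - ℓ t)` of the trapezoid and translated by `± ℓ d t` outside it; the two agree on
the legs of the trapezoid, and clamping the height to `[0, 1]` accounts for `G₃`, `G₄`, `G₅`.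
That formula is odd in `x`, so it also describes the reflected extension, and it is visibly
continuous. On the trapezoid it is `(x, y) ↦ (x / (1 - ℓ y), y)`, a bijection onto the
rectangle `[-d, d] × [0, 1]`.
-/

lemma trapezoid_formula_eq (ℓ : ℝ) (z : ℂ) (h : 1 - ℓ * z.im ≠ 0) :
    (4 * z + I * (ℓ : ℂ) * (z - conj z) ^ 2) / (4 + 2 * I * (ℓ : ℂ) * (z - conj z)) =
      (z.re / (1 - ℓ * z.im) : ℝ) + z.im * I := by
  have h' : (1 - ℓ * z.im : ℂ) ≠ 0 := by exact_mod_cast h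
  have hden : 4 + 2 * I * (ℓ : ℂ) * (z - conj z) = 4 * (1 - ℓ * z.im) := by
    rw [sub_conj]; push_cast; linear_combination (4 * (ℓ : ℂ) * z.im) * I_sq
  rw [hden, div_eq_iff (mul_ne_zero (by norm_num) h'), sub_conj]
  -- abstract `z.re`, `z.im` so that `rw [← re_add_im z]` only rewrites the bare `z`
  set x := z.re
  set y := z.im
  rw [← re_add_im z]
  push_cast
  field_simp
  linear_combination (4 * (ℓ : ℂ) * y ^ 2 * I) * I_sq

lemma shear_formula_eq (w z : ℂ) : z - (I * w / 2) * (z - conj z) = z + w * z.im := by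
  rw [sub_conj]; push_cast; linear_combination (-w * z.im) * I_sq

lemma stretch_formula_eq (ℓ : ℝ) (z : ℂ) (h : 1 - ℓ ≠ 0) :
    ((2 - (ℓ : ℂ)) * z + (ℓ : ℂ) * conj z) / (2 * (1 - (ℓ : ℂ))) =
      (z.re / (1 - ℓ) : ℝ) + z.im * I := by
  have h' : (1 - ℓ : ℂ) ≠ 0 := by exact_mod_cast h
  rw [div_eq_iff (mul_ne_zero two_ne_zero h')]
  set x := z.re
  set y := z.im
  rw [← re_add_im z]
  simp only [map_add, map_mul, conj_ofReal, conj_I]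
  push_cast
  field_simp
  ring

noncomputable def trapMapRe (ℓ d x t : ℝ) : ℝ :=
  max (min (x / (1 - ℓ * t)) (x + ℓ * d * t)) (x - ℓ * d * t)

section trapMapRe

variable {ℓ d x t : ℝ}

@[simp]
lemma trapMapRe_zero_right : trapMapRe ℓ d x 0 = x := by
  simp [trapMapRe]

lemma trapMapRe_neg (hℓ : 0 ≤ ℓ) (hd : 0 ≤ d) (ht : 0 ≤ t) (x : ℝ) :
    trapMapRe ℓ d (-x) t = -trapMapRe ℓ d x t := by
  have hx : x - ℓ * d * t ≤ x + ℓ * d * t := by nlinarith [mul_nonneg (mul_nonneg hℓ hd) ht]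
  rw [trapMapRe, trapMapRe, neg_div, show -x + ℓ * d * t = -(x - ℓ * d * t) by ring,
    show -x - ℓ * d * t = -(x + ℓ * d * t) by ring, min_neg_neg, max_neg_neg, neg_inj,
    max_min_distrib_right, max_eq_left hx]

lemma trapMapRe_zero_left (hℓ : 0 ≤ ℓ) (hd : 0 ≤ d) (ht : 0 ≤ t) : trapMapRe ℓ d 0 t = 0 := by
  have h := trapMapRe_neg hℓ hd ht 0
  rw [neg_zero] at h
  linarith

lemma trapMapRe_eq_div (hℓ : 0 ≤ ℓ) (ht : 0 ≤ t) (hℓt : ℓ * t < 1) (hx : |x| ≤ d * (1 - ℓ * t)) :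
    trapMapRe ℓ d x t = x / (1 - ℓ * t) := by
  obtain ⟨hx₁, hx₂⟩ := abs_le.1 hx
  have hpos : 0 < 1 - ℓ * t := by linarith
  have hs : 0 ≤ ℓ * t := mul_nonneg hℓ ht
  have hle_add : x / (1 - ℓ * t) ≤ x + ℓ * d * t := by
    rw [div_le_iff₀ hpos]; nlinarith [mul_nonneg hs (sub_nonneg.2 hx₂)]
  have hsub_le : x - ℓ * d * t ≤ x / (1 - ℓ * t) := by
    rw [le_div_iff₀ hpos]; nlinarith [mul_nonneg hs (neg_le_iff_add_nonneg.1 hx₁)]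
  rw [trapMapRe, min_eq_left hle_add, max_eq_left hsub_le]

lemma trapMapRe_eq_add (hℓ : 0 ≤ ℓ) (hd : 0 ≤ d) (ht : 0 ≤ t) (hℓt : ℓ * t < 1)
    (hx : d * (1 - ℓ * t) ≤ x) : trapMapRe ℓ d x t = x + ℓ * d * t := by
  have hpos : 0 < 1 - ℓ * t := by linarith
  have hs : 0 ≤ ℓ * t := mul_nonneg hℓ ht
  have hadd_le : x + ℓ * d * t ≤ x / (1 - ℓ * t) := by
    rw [le_div_iff₀ hpos]; nlinarith [mul_nonneg hs (sub_nonneg.2 hx)]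
  have hsub_le : x - ℓ * d * t ≤ x + ℓ * d * t := by nlinarith [mul_nonneg hs hd]
  rw [trapMapRe, min_eq_right hadd_le, max_eq_left hsub_le]

lemma continuous_trapMapRe_clamp (hℓ : ℓ < 1) :
    Continuous fun z : ℂ => trapMapRe ℓ d z.re (min (max z.im 0) 1) := by
  have hden (z : ℂ) : 1 - ℓ * min (max z.im 0) 1 ≠ 0 := by
    have h₀ : 0 ≤ min (max z.im 0) 1 := le_min (le_max_right _ _) zero_le_one
    have h₁ : min (max z.im 0) 1 ≤ 1 := min_le_right _ _
    rcases le_or_gt 0 ℓ with hℓ₀ | hℓ₀ <;> nlinarith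
  unfold trapMapRe
  fun_prop (disch := exact hden _)

end trapMapRe

lemma min_max_eq_self {a b y : ℝ} (ha : a ≤ y) (hb : y ≤ b) : min (max y a) b = y := by
  rw [max_eq_left ha, min_eq_left hb]

section trapMap

variable {ℓ c d : ℝ}

lemma trapMap_eq (hℓ₀ : 0 ≤ ℓ) (hℓ₁ : ℓ < 1) (hd : 0 ≤ d) (hc : c = d * (1 - ℓ)) {z : ℂ}
    (hz : 0 ≤ z.re) :
    trapMap ℓ c d z = trapMapRe ℓ d z.re (min (max z.im 0) 1) + z.im * I := by
  subst hc
  unfold trapMap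
  split_ifs with h₀ h₁ h₂ h₃
  · rw [show min (max z.im 0) 1 = 0 by simp [max_eq_right h₀], trapMapRe_zero_right, re_add_im]
  · push Not at h₀
    have hℓy : ℓ * z.im < 1 := mul_lt_one_of_nonneg_of_lt_one_left hℓ₀ hℓ₁ h₁
    rw [trapezoid_formula_eq _ _ (by linarith), min_max_eq_self h₀.le h₁,
      trapMapRe_eq_div hℓ₀ h₀.le hℓy (abs_le.2 ⟨by linarith, h₂⟩)]
  · push Not at h₀ h₂
    have hℓy : ℓ * z.im < 1 := mul_lt_one_of_nonneg_of_lt_one_left hℓ₀ hℓ₁ h₁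
    rw [shear_formula_eq, min_max_eq_self h₀.le h₁, trapMapRe_eq_add hℓ₀ hd h₀.le hℓy h₂.le]
    nth_rw 1 [← re_add_im z]
    push_cast
    ring
  · push Not at h₁
    rw [stretch_formula_eq _ _ (by linarith), min_eq_right (le_max_of_le_left h₁.le),
      trapMapRe_eq_div hℓ₀ zero_le_one (by simpa using hℓ₁) (abs_le.2 ⟨by nlinarith, by simpa⟩),
      mul_one]
  · push Not at h₁ h₃
    rw [min_eq_right (le_max_of_le_left h₁.le),
      trapMapRe_eq_add hℓ₀ hd zero_le_one (by simpa using hℓ₁) (by simpa using h₃.le)]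
    nth_rw 1 [← re_add_im z]
    push_cast
    ring

lemma trapMapExt_eq (hℓ₀ : 0 ≤ ℓ) (hℓ₁ : ℓ < 1) (hd : 0 ≤ d) (hc : c = d * (1 - ℓ)) (z : ℂ) :
    trapMapExt ℓ c d z = trapMapRe ℓ d z.re (min (max z.im 0) 1) + z.im * I := by
  unfold trapMapExt
  split_ifs with hz
  · exact trapMap_eq hℓ₀ hℓ₁ hd hc hz
  · have hz' : 0 ≤ (-conj z).re := by simp only [neg_re, conj_re]; linarith
    rw [trapMap_eq hℓ₀ hℓ₁ hd hc hz']
    simp only [neg_re, conj_re, neg_im, conj_im, neg_neg,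
      trapMapRe_neg hℓ₀ hd (le_min (le_max_right _ _) zero_le_one)]
    simp only [map_add, map_mul, conj_ofReal, conj_I]
    push_cast
    ring

lemma trapMap_ofReal_mul_I (hℓ₀ : 0 ≤ ℓ) (hℓ₁ : ℓ < 1) (hd : 0 ≤ d) (hc : c = d * (1 - ℓ))
    (y : ℝ) : trapMap ℓ c d (y * I) = y * I := by
  rw [trapMap_eq hℓ₀ hℓ₁ hd hc (by simp)]
  simp [trapMapRe_zero_left hℓ₀ hd (le_min (le_max_right _ _) zero_le_one)]

lemma continuous_trapMapExt (hℓ₀ : 0 ≤ ℓ) (hℓ₁ : ℓ < 1) (hd : 0 ≤ d) (hc : c = d * (1 - ℓ)) :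
    Continuous (trapMapExt ℓ c d) := by
  rw [funext (trapMapExt_eq hℓ₀ hℓ₁ hd hc)]
  exact (continuous_ofReal.comp (continuous_trapMapRe_clamp hℓ₁)).add (by fun_prop)

lemma trapMapExt_image_trapezoid (hℓ₀ : 0 ≤ ℓ) (hℓ₁ : ℓ < 1) (hd : 0 ≤ d)
    (hc : c = d * (1 - ℓ)) :
    trapMapExt ℓ c d '' {z : ℂ | 0 ≤ z.im ∧ z.im ≤ 1 ∧ |z.re| ≤ d * (1 - ℓ * z.im)} =
      {z : ℂ | -d ≤ z.re ∧ z.re ≤ d ∧ 0 ≤ z.im ∧ z.im ≤ 1} := by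
  ext w
  simp only [Set.mem_image, Set.mem_ofPred_eq, trapMapExt_eq hℓ₀ hℓ₁ hd hc, ← mk_eq_add_mul_I]
  constructor
  · rintro ⟨z, ⟨hy₀, hy₁, hx⟩, rfl⟩
    have hℓy : ℓ * z.im < 1 := mul_lt_one_of_nonneg_of_lt_one_left hℓ₀ hℓ₁ hy₁
    have hpos : 0 < 1 - ℓ * z.im := by linarith
    have hbound : |z.re / (1 - ℓ * z.im)| ≤ d := by
      rw [abs_div, abs_of_pos hpos, div_le_iff₀ hpos]; exact hx
    rw [min_max_eq_self hy₀ hy₁, trapMapRe_eq_div hℓ₀ hy₀ hℓy hx]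
    exact ⟨(abs_le.1 hbound).1, (abs_le.1 hbound).2, hy₀, hy₁⟩
  · rintro ⟨hx₁, hx₂, hy₀, hy₁⟩
    have hℓy : ℓ * w.im < 1 := mul_lt_one_of_nonneg_of_lt_one_left hℓ₀ hℓ₁ hy₁
    have hpos : 0 < 1 - ℓ * w.im := by linarith
    have hpre : |w.re * (1 - ℓ * w.im)| ≤ d * (1 - ℓ * w.im) := by
      rw [abs_mul, abs_of_pos hpos]
      exact mul_le_mul_of_nonneg_right (abs_le.2 ⟨hx₁, hx₂⟩) hpos.le
    refine ⟨⟨w.re * (1 - ℓ * w.im), w.im⟩, ⟨hy₀, hy₁, hpre⟩, ?_⟩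
    rw [min_max_eq_self hy₀ hy₁, trapMapRe_eq_div hℓ₀ hy₀ hℓy hpre, mul_div_cancel_right₀ _ hpos.ne']

end trapMap

/-- The two formulas defining the extension agree on the imaginary axis, the extension
is continuous on `ℂ`, and it maps the isosceles trapezoid with vertices
`−d, d, c + i, −c + i` onto the rectangle `[−d, d] × [0, 1]`. -/
theorem stmt_19 (c d : ℝ) (hc : 0 < c) (hcd : c < d) (ℓ : ℝ) (hℓ : ℓ = (d - c) / d) :
    (∀ y : ℝ,
      trapMap ℓ c d ((y : ℂ) * I) = -conj (trapMap ℓ c d (-conj ((y : ℂ) * I)))) ∧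
    Continuous (trapMapExt ℓ c d) ∧
    trapMapExt ℓ c d ''
        {z : ℂ | 0 ≤ z.im ∧ z.im ≤ 1 ∧ |z.re| ≤ d * (1 - ℓ * z.im)} =
      {z : ℂ | -d ≤ z.re ∧ z.re ≤ d ∧ 0 ≤ z.im ∧ z.im ≤ 1} := by
  have hd : 0 < d := hc.trans hcd
  have hℓ₀ : 0 ≤ ℓ := hℓ ▸ div_nonneg (sub_nonneg.2 hcd.le) hd.le
  have hℓ₁ : ℓ < 1 := by rw [hℓ, div_lt_one hd]; linarith
  have hc' : c = d * (1 - ℓ) := by rw [hℓ]; field_simp; ring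
  refine ⟨fun y => ?_, continuous_trapMapExt hℓ₀ hℓ₁ hd.le hc',
    trapMapExt_image_trapezoid hℓ₀ hℓ₁ hd.le hc'⟩
  have hmirror : -conj ((y : ℂ) * I) = y * I := by simp
  rw [hmirror, trapMap_ofReal_mul_I hℓ₀ hℓ₁ hd.le hc', hmirror]
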